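/- arXiv:2509.23857 — 7 statements merged into one kernel-verified Lean document; each statement's English description precedes it below -/
import Mathlib

section
/- Let K be a totally real number field and let Q(x,y) = αx² + βxy + γy² be a totally positive definite binary quadratic form with coefficients in the ring of integers O_K. If α and γ are indecomposable totally positive integers of O_K (i.e., neither can be written as a sum of two totally positive integers) and β ≠ 0, then Q is additively indecomposable, i.e., Q cannot be written as Q₁ + Q₂ where Q₁, Q₂ are nonzero totally positive semi-definite binary quadratic forms over O_K. -/
/-!
Write the decomposition as `(a₁, b₁, c₁) + (a₂, b₂, c₂)`. Since `α = a₁ + a₂` is indecomposable and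
both `aᵢ` are totally nonnegative, one of them, say `a₁`, vanishes. A semi-definite form without
`x²` term has no `xy` term either, so the first summand is `c₁ y²` with `c₁ ≠ 0`; indecomposability
of `γ = c₁ + c₂` then gives `c₂ = 0`, the second summand is `a₂ x²` for the same reason, and
`β = b₁ + b₂ = 0`.
-/

open NumberField

variable {K : Type*}

/-- An algebraic integer is totally positive if it is positive under every real embedding. -/
def TPos [Field K] [NumberField K] (x : 𝓞 K) : Prop :=
  ∀ φ : K →+* ℝ, 0 < φ (algebraMap (𝓞 K) K x)

/-- Totally positive or zero. -/
def TNonneg [Field K] [NumberField K] (x : 𝓞 K) : Prop :=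
  TPos x ∨ x = 0

/-- An indecomposable totally positive algebraic integer. -/
def IndecElem [Field K] [NumberField K] (x : 𝓞 K) : Prop :=
  TPos x ∧ ¬ ∃ y z : 𝓞 K, TPos y ∧ TPos z ∧ x = y + z

/-- The binary quadratic form a x² + b x y + c y² is totally positive semi-definite. -/
def BinSemiDef [Field K] [NumberField K] (a b c : 𝓞 K) : Prop :=
  ∀ x y : 𝓞 K, TNonneg (a * x ^ 2 + b * x * y + c * y ^ 2)

/-- The binary quadratic form a x² + b x y + c y² is totally positive definite. -/
def BinPosDef [Field K] [NumberField K] (a b c : 𝓞 K) : Prop :=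
  BinSemiDef a b c ∧
    ∀ x y : 𝓞 K, a * x ^ 2 + b * x * y + c * y ^ 2 = 0 → x = 0 ∧ y = 0

/-- Additive indecomposability: the form is not a sum of two nonzero totally positive
semi-definite binary quadratic forms. -/
def BinIndec [Field K] [NumberField K] (a b c : 𝓞 K) : Prop :=
  ¬ ∃ a₁ b₁ c₁ a₂ b₂ c₂ : 𝓞 K,
      BinSemiDef a₁ b₁ c₁ ∧ BinSemiDef a₂ b₂ c₂ ∧
      ¬(a₁ = 0 ∧ b₁ = 0 ∧ c₁ = 0) ∧ ¬(a₂ = 0 ∧ b₂ = 0 ∧ c₂ = 0) ∧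
      a = a₁ + a₂ ∧ b = b₁ + b₂ ∧ c = c₁ + c₂

/-- Additive indecomposability into classical forms (off-diagonal coefficients even). -/
def BinIndecCl [Field K] [NumberField K] (a b c : 𝓞 K) : Prop :=
  ¬ ∃ a₁ b₁ c₁ a₂ b₂ c₂ : 𝓞 K,
      2 ∣ b₁ ∧ 2 ∣ b₂ ∧
      BinSemiDef a₁ b₁ c₁ ∧ BinSemiDef a₂ b₂ c₂ ∧
      ¬(a₁ = 0 ∧ b₁ = 0 ∧ c₁ = 0) ∧ ¬(a₂ = 0 ∧ b₂ = 0 ∧ c₂ = 0) ∧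
      a = a₁ + a₂ ∧ b = b₁ + b₂ ∧ c = c₁ + c₂

open ComplexEmbedding in
lemma nonempty_realEmbedding_of_im_eq_zero [Field K] [NumberField K]
    (htotallyReal : ∀ φ : K →+* ℂ, ∀ x : K, (φ x).im = 0) : Nonempty (K →+* ℝ) :=
  let φ : K →+* ℂ := Classical.arbitrary _
  ⟨IsReal.embedding (φ := φ) <| isReal_iff.mpr <|
    RingHom.ext fun x => Complex.conj_eq_iff_im.mpr (htotallyReal φ x)⟩

section BinaryForms

variable [Field K] [NumberField K]

lemma IndecElem.eq_zero_or_eq_zero {a a₁ a₂ : 𝓞 K} (ha : IndecElem a)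
    (h₁ : TNonneg a₁) (h₂ : TNonneg a₂) (hsum : a = a₁ + a₂) : a₁ = 0 ∨ a₂ = 0 := by
  by_contra! hne
  exact ha.2 ⟨a₁, a₂, h₁.resolve_right hne.1, h₂.resolve_right hne.2, hsum⟩

namespace BinSemiDef

variable {a b c : 𝓞 K}

lemma tnonneg_left (h : BinSemiDef a b c) : TNonneg a := by
  simpa using h 1 0

lemma tnonneg_right (h : BinSemiDef a b c) : TNonneg c := by
  simpa using h 0 1

lemma swap (h : BinSemiDef a b c) : BinSemiDef c b a := fun x y => by
  convert h y x using 1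
  ring

/- If `b ≠ 0`, then at `(x, y) = (-m b, 1)` with `m ∈ ℕ` large the form takes the value `c - m b²`,
which is negative at any real embedding. -/
lemma middle_eq_zero_of_left_eq_zero (φ : K →+* ℝ) (h : BinSemiDef 0 b c) : b = 0 := by
  by_contra hb
  set t := φ (algebraMap (𝓞 K) K b)
  set s := φ (algebraMap (𝓞 K) K c)
  have ht : 0 < t ^ 2 := by
    have : t ≠ 0 := by simpa [t] using hb
    positivity
  obtain ⟨m, hm⟩ := exists_nat_gt (s / t ^ 2)
  have hval : φ (algebraMap (𝓞 K) K (0 * (-(m * b)) ^ 2 + b * (-(m * b)) * 1 + c * 1 ^ 2))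
      = s - m * t ^ 2 := by
    simp only [zero_mul, zero_add, one_pow, mul_one, map_add, map_mul, map_neg, map_natCast]
    ring
  have hneg : s - m * t ^ 2 < 0 := by
    rw [div_lt_iff₀ ht] at hm
    linarith
  rcases h (-(m * b)) 1 with hpos | hzero
  · exact (hpos φ).not_gt (hval ▸ hneg)
  · rw [hzero, map_zero, map_zero] at hval
    linarith

lemma add_middle_eq_zero_of_left_eq_zero (φ : K →+* ℝ) {a₁ b₁ c₁ a₂ b₂ c₂ : 𝓞 K}
    (h₁ : BinSemiDef a₁ b₁ c₁) (h₂ : BinSemiDef a₂ b₂ c₂) (hn₁ : ¬(a₁ = 0 ∧ b₁ = 0 ∧ c₁ = 0))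
    (hc : IndecElem (c₁ + c₂)) (ha₁ : a₁ = 0) : b₁ + b₂ = 0 := by
  subst ha₁
  have hb₁ : b₁ = 0 := h₁.middle_eq_zero_of_left_eq_zero φ
  have hc₂ : c₂ = 0 :=
    (hc.eq_zero_or_eq_zero h₁.tnonneg_right h₂.tnonneg_right rfl).resolve_left
      fun hc₁ => hn₁ ⟨rfl, hb₁, hc₁⟩
  subst hc₂
  have hb₂ : b₂ = 0 := h₂.swap.middle_eq_zero_of_left_eq_zero φ
  rw [hb₁, hb₂, add_zero]

end BinSemiDef

end BinaryForms

theorem stmt0_general [Field K] [NumberField K]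
    (htotallyReal : ∀ φ : K →+* ℂ, ∀ x : K, (φ x).im = 0)
    (α β γ : 𝓞 K)
    (hα : IndecElem α) (hγ : IndecElem γ) (hβ : β ≠ 0) :
    BinIndec α β γ := by
  obtain ⟨φ⟩ := nonempty_realEmbedding_of_im_eq_zero htotallyReal
  rintro ⟨a₁, b₁, c₁, a₂, b₂, c₂, h₁, h₂, hn₁, hn₂, rfl, rfl, rfl⟩
  rcases hα.eq_zero_or_eq_zero h₁.tnonneg_left h₂.tnonneg_left rfl with ha₁ | ha₂
  · exact hβ (h₁.add_middle_eq_zero_of_left_eq_zero φ h₂ hn₁ hγ ha₁)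
  · rw [add_comm] at hβ hγ
    exact hβ (h₂.add_middle_eq_zero_of_left_eq_zero φ h₁ hn₂ hγ ha₂)

theorem stmt0 [Field K] [NumberField K]
    (htotallyReal : ∀ φ : K →+* ℂ, ∀ x : K, (φ x).im = 0)
    (α β γ : 𝓞 K) (hpd : BinPosDef α β γ)
    (hα : IndecElem α) (hγ : IndecElem γ) (hβ : β ≠ 0) :
    BinIndec α β γ :=
  stmt0_general htotallyReal α β γ hα hγ hβ
end

section
/- Over every totally real number field K, the binary quadratic form Q(x,y) = x² + xy + y² is totally positive definite and additively indecomposable over O_K. -/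
open NumberField

variable {K : Type*}

/-!
The form is positive definite because `X² + XY + Y²` is so over `ℝ` and real embeddings are
injective. For indecomposability, write `x² + xy + y² = Q₁ + Q₂`. The `x²`-coefficients are
totally nonnegative and add up to `1`, which is indecomposable (a totally positive `a` with
`1 - a` totally positive would have all conjugates in `(0, 1)`, so its norm would be a nonzero
integer of absolute value `< 1`). Hence, say, `Q₁ = b₁ xy + c₁ y²`; semidefiniteness forces
`b₁ = 0`, and indecomposability of `1` again gives `Q₂ = x² + xy`, which takes the value `-1`.
-/

section QuadraticForm

variable {α : Type*} [CommRing α] [LinearOrder α] [IsStrictOrderedRing α]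

lemma sq_add_mul_add_sq_nonneg (X Y : α) : 0 ≤ X ^ 2 + X * Y + Y ^ 2 := by
  nlinarith [sq_nonneg (X + Y), sq_nonneg X, sq_nonneg Y]

lemma sq_add_mul_add_sq_eq_zero_iff {X Y : α} : X ^ 2 + X * Y + Y ^ 2 = 0 ↔ X = 0 ∧ Y = 0 := by
  refine ⟨fun h => ?_, fun ⟨hX, hY⟩ => by simp [hX, hY]⟩
  have hX : X ^ 2 = 0 := by nlinarith [sq_nonneg (X + Y), sq_nonneg X, sq_nonneg Y]
  have hY : Y ^ 2 = 0 := by nlinarith [sq_nonneg (X + Y), sq_nonneg X, sq_nonneg Y]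
  exact ⟨pow_eq_zero_iff two_ne_zero |>.mp hX, pow_eq_zero_iff two_ne_zero |>.mp hY⟩

end QuadraticForm

lemma eq_zero_of_forall_int_mul_add_nonneg {α : Type*} [Field α] [LinearOrder α]
    [IsStrictOrderedRing α] [Archimedean α] {r s : α}
    (h : ∀ n : ℤ, 0 ≤ r * n + s) : r = 0 := by
  by_contra hr
  obtain ⟨n, hn⟩ := exists_nat_gt (s / |r|)
  have hsn : s < n * |r| := (div_lt_iff₀ (abs_pos.mpr hr)).mp hn
  rcases lt_or_gt_of_ne hr with hneg | hpos
  · have := h n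
    rw [abs_of_neg hneg] at hsn
    push_cast at this
    linarith
  · have := h (-n)
    rw [abs_of_pos hpos] at hsn
    push_cast at this
    linarith

lemma NumberField.ComplexEmbedding.isReal_of_forall_im_eq_zero [Field K] {φ : K →+* ℂ}
    (h : ∀ x : K, (φ x).im = 0) : ComplexEmbedding.IsReal φ :=
  ComplexEmbedding.isReal_iff.mpr <| RingHom.ext fun x => Complex.conj_eq_iff_im.mpr (h x)

lemma map_algebraMap_eq_zero_iff [Field K] (ψ : K →+* ℝ) {x : 𝓞 K} :
    ψ (algebraMap (𝓞 K) K x) = 0 ↔ x = 0 := by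
  rw [map_eq_zero, RingOfIntegers.coe_eq_zero_iff]

section TotallyPositive

variable [Field K] [NumberField K]

lemma nonempty_realEmbedding_of_forall_im_eq_zero
    (htR : ∀ φ : K →+* ℂ, ∀ x : K, (φ x).im = 0) : Nonempty (K →+* ℝ) :=
  ⟨(ComplexEmbedding.isReal_of_forall_im_eq_zero (htR (Classical.arbitrary _))).embedding⟩

lemma tPos_one : TPos (1 : 𝓞 K) := fun φ => by simp

lemma TPos.ne_zero {x : 𝓞 K} (hx : TPos x) (ψ : K →+* ℝ) : x ≠ 0 := by
  rintro rfl
  simpa using hx ψ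

lemma TNonneg.nonneg {x : 𝓞 K} (hx : TNonneg x) (ψ : K →+* ℝ) :
    0 ≤ ψ (algebraMap (𝓞 K) K x) := by
  rcases hx with hx | rfl
  · exact (hx ψ).le
  · simp

lemma not_tNonneg_neg_one (ψ : K →+* ℝ) : ¬ TNonneg (-1 : 𝓞 K) := fun h =>
  absurd (h.nonneg ψ) (by simp)

lemma IndecElem.eq_zero_or_eq_zero_s1 {u a b : 𝓞 K} (hu : IndecElem u) (ha : TNonneg a)
    (hb : TNonneg b) (hab : u = a + b) : a = 0 ∨ b = 0 := by
  rcases ha with ha | ha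
  · rcases hb with hb | hb
    · exact (hu.2 ⟨a, b, ha, hb, hab⟩).elim
    · exact Or.inr hb
  · exact Or.inl ha

lemma indecElem_one (htR : ∀ φ : K →+* ℂ, ∀ x : K, (φ x).im = 0) : IndecElem (1 : 𝓞 K) := by
  refine ⟨tPos_one, ?_⟩
  rintro ⟨y, z, hy, hz, hyz⟩
  obtain ⟨ψ₀⟩ := nonempty_realEmbedding_of_forall_im_eq_zero htR
  obtain ⟨σ, hσ⟩ := exists_conjugate_one_le_norm (hy.ne_zero ψ₀)
  have hσ_real := ComplexEmbedding.isReal_of_forall_im_eq_zero (htR σ)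
  let ψ := hσ_real.embedding
  have hσψ : ‖σ (algebraMap (𝓞 K) K y)‖ = ψ (algebraMap (𝓞 K) K y) := by
    rw [← hσ_real.coe_embedding_apply, Complex.norm_real, Real.norm_eq_abs,
      abs_of_pos (hy ψ)]
  have hsum : ψ (algebraMap (𝓞 K) K y) + ψ (algebraMap (𝓞 K) K z) = 1 := by
    simp only [← map_add, ← hyz, map_one]
  linarith [hz ψ]

end TotallyPositive

section BinaryForms

variable [Field K] [NumberField K]

lemma BinSemiDef.tNonneg_left {a b c : 𝓞 K} (h : BinSemiDef a b c) : TNonneg a := by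
  simpa using h 1 0

lemma BinSemiDef.tNonneg_right {a b c : 𝓞 K} (h : BinSemiDef a b c) : TNonneg c := by
  simpa using h 0 1

/-- Along `y = 1` the form `b x y + c y²` is the affine function `b x + c`, bounded below only
if `b = 0`. -/
lemma BinSemiDef.eq_zero_of_zero_left (ψ : K →+* ℝ) {b c : 𝓞 K} (h : BinSemiDef 0 b c) :
    b = 0 := by
  refine (map_algebraMap_eq_zero_iff ψ).mp <|
    eq_zero_of_forall_int_mul_add_nonneg (s := ψ (algebraMap (𝓞 K) K c)) fun n => ?_
  simpa using (h n 1).nonneg ψ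

lemma not_binSemiDef_one_one_zero (ψ : K →+* ℝ) : ¬ BinSemiDef (1 : 𝓞 K) 1 0 := fun h =>
  not_tNonneg_neg_one ψ (by simpa [show (1 : 𝓞 K) + -2 = -1 by norm_num] using h 1 (-2))

lemma binSemiDef_one_one_one : BinSemiDef (1 : 𝓞 K) 1 1 := by
  intro x y
  by_cases hq : (1 : 𝓞 K) * x ^ 2 + 1 * x * y + 1 * y ^ 2 = 0
  · exact Or.inr hq
  · refine Or.inl fun φ => lt_of_le_of_ne' ?_ ((map_algebraMap_eq_zero_iff φ).not.mpr hq)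
    simpa only [map_add, map_mul, map_pow, map_one, one_mul] using sq_add_mul_add_sq_nonneg _ _

lemma binPosDef_one_one_one (ψ : K →+* ℝ) : BinPosDef (1 : 𝓞 K) 1 1 := by
  refine ⟨binSemiDef_one_one_one, fun x y hq => ?_⟩
  have hψ := congrArg (fun q => ψ (algebraMap (𝓞 K) K q)) hq
  simp only [map_add, map_mul, map_pow, one_mul, map_zero] at hψ
  obtain ⟨hx, hy⟩ := sq_add_mul_add_sq_eq_zero_iff.mp hψ
  exact ⟨(map_algebraMap_eq_zero_iff ψ).mp hx, (map_algebraMap_eq_zero_iff ψ).mp hy⟩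

lemma BinSemiDef.eq_zero_of_add_eq_one_one_one (ψ : K →+* ℝ) (h1 : IndecElem (1 : 𝓞 K))
    {b₁ c₁ a₂ b₂ c₂ : 𝓞 K} (h₁ : BinSemiDef 0 b₁ c₁) (h₂ : BinSemiDef a₂ b₂ c₂)
    (ha : (1 : 𝓞 K) = 0 + a₂) (hb : (1 : 𝓞 K) = b₁ + b₂) (hc : (1 : 𝓞 K) = c₁ + c₂) :
    b₁ = 0 ∧ c₁ = 0 := by
  obtain rfl := h₁.eq_zero_of_zero_left ψ
  refine ⟨rfl, by_contra fun hc₁ => ?_⟩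
  obtain rfl : c₂ = 0 :=
    (h1.eq_zero_or_eq_zero_s1 h₁.tNonneg_right h₂.tNonneg_right hc).resolve_left hc₁
  rw [zero_add] at ha hb
  subst ha hb
  exact not_binSemiDef_one_one_zero ψ h₂

end BinaryForms

theorem stmt1 [Field K] [NumberField K]
    (htotallyReal : ∀ φ : K →+* ℂ, ∀ x : K, (φ x).im = 0) :
    BinPosDef (1 : 𝓞 K) 1 1 ∧ BinIndec (1 : 𝓞 K) 1 1 := by
  obtain ⟨ψ⟩ := nonempty_realEmbedding_of_forall_im_eq_zero htotallyReal
  have h1 := indecElem_one htotallyReal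
  refine ⟨binPosDef_one_one_one ψ, ?_⟩
  rintro ⟨a₁, b₁, c₁, a₂, b₂, c₂, h₁, h₂, hn₁, hn₂, ha, hb, hc⟩
  rcases h1.eq_zero_or_eq_zero_s1 h₁.tNonneg_left h₂.tNonneg_left ha with rfl | rfl
  · exact hn₁ ⟨rfl, h₁.eq_zero_of_add_eq_one_one_one ψ h1 h₂ ha hb hc⟩
  · rw [add_comm] at ha hb hc
    exact hn₂ ⟨rfl, h₂.eq_zero_of_add_eq_one_one_one ψ h1 h₁ ha hb hc⟩
end

section
/- In any real biquadratic field K = Q(√p,√q), the only decompositions of 2 as a sum of two elements of O_K⁺ ∪ {0} are 2 = 0 + 2 and 2 = 1 + 1. -/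
open NumberField

variable {K : Type*}

/-! Being generated by square roots of non-negative rationals, `K` is totally real. If `α` and `β`
are both totally positive, every real conjugate of `α - 1` lies in `(-1, 1)`, so the rational
integer `N(α - 1)` has absolute value below `1`; hence it vanishes and `α = 1`. -/

theorem Complex.im_eq_zero_of_sq_eq_ofReal {z : ℂ} {r : ℝ} (hr : 0 ≤ r) (hz : z ^ 2 = r) :
    z.im = 0 := by
  have him : z.re * z.im = 0 := by
    have := congrArg Complex.im hz
    simp only [sq, Complex.mul_im, Complex.ofReal_im] at this
    linarith
  have hre : z.re ^ 2 - z.im ^ 2 = r := by simpa [sq] using congrArg Complex.re hz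
  rcases mul_eq_zero.mp him with h | h
  · nlinarith [sq_nonneg z.im]
  · exact h

namespace NumberField

variable [Field K]

theorem mem_maximalRealSubfield_of_sq_eq_ratCast {s : K} {r : ℚ} (hr : 0 ≤ r) (hs : s ^ 2 = r) :
    s ∈ maximalRealSubfield K := by
  intro φ
  rw [RCLike.star_def, Complex.conj_eq_iff_im]
  refine Complex.im_eq_zero_of_sq_eq_ofReal (r := r) (by exact_mod_cast hr) ?_
  rw [← map_pow, hs, map_ratCast, Complex.ofReal_ratCast]

variable [NumberField K]

theorem isTotallyReal_of_adjoin_eq_top {S : Set K}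
    (hS : S ⊆ maximalRealSubfield K) (h : Algebra.adjoin ℚ S = ⊤) : IsTotallyReal K := by
  rw [← maximalRealSubfield_eq_top_iff_isTotallyReal, eq_top_iff]
  intro x _
  have hx : x ∈ Algebra.adjoin ℚ S := h ▸ Algebra.mem_top
  exact Algebra.adjoin_le (S := ((maximalRealSubfield K).toIntermediateField
    fun r ↦ SubfieldClass.ratCast_mem _ r).toSubalgebra) hS hx

theorem RingOfIntegers.eq_zero_of_forall_infinitePlace_lt_one {x : 𝓞 K}
    (h : ∀ w : InfinitePlace K, w x < 1) : x = 0 := by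
  by_contra hx
  obtain ⟨w⟩ : Nonempty (InfinitePlace K) := inferInstance
  exact (InfinitePlace.one_le_of_lt_one hx fun z _ ↦ h z).not_gt (h w)

theorem RingOfIntegers.eq_zero_of_forall_abs_lt_one [IsTotallyReal K] {x : 𝓞 K}
    (h : ∀ φ : K →+* ℝ, |φ (algebraMap (𝓞 K) K x)| < 1) : x = 0 :=
  eq_zero_of_forall_infinitePlace_lt_one fun w ↦ by
    rw [← InfinitePlace.norm_embedding_of_isReal (IsTotallyReal.isReal w)]
    exact h _

theorem eq_one_of_tPos_of_add_eq_two [IsTotallyReal K] {α β : 𝓞 K}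
    (hα : TPos α) (hβ : TPos β) (hsum : α + β = 2) : α = 1 ∧ β = 1 := by
  have hα1 : α - 1 = 0 := RingOfIntegers.eq_zero_of_forall_abs_lt_one fun φ ↦ by
    let ψ := φ.comp (algebraMap (𝓞 K) K)
    have hψα : 0 < ψ α := hα φ
    have hψβ : 0 < ψ β := hβ φ
    have hψ : ψ α + ψ β = 2 := by rw [← map_add, hsum, map_ofNat]
    change |ψ (α - 1)| < 1
    rw [map_sub, map_one, abs_lt]
    constructor <;> linarith
  exact ⟨sub_eq_zero.mp hα1, by linear_combination hsum - hα1⟩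

end NumberField

theorem stmt4_general [Field K] [NumberField K]
    (p q : ℕ)
    (sp sq : K) (hsp : sp ^ 2 = (p : K)) (hsq : sq ^ 2 = (q : K))
    (hgen : Algebra.adjoin ℚ {sp, sq} = ⊤)
    (α β : 𝓞 K) (hα : TNonneg α) (hβ : TNonneg β) (hsum : α + β = 2) :
    (α = 0 ∧ β = 2) ∨ (α = 2 ∧ β = 0) ∨ (α = 1 ∧ β = 1) := by
  have hS : {sp, sq} ⊆ (maximalRealSubfield K : Set K) := by
    rintro s (rfl | rfl)
    · exact mem_maximalRealSubfield_of_sq_eq_ratCast (r := p) p.cast_nonneg (by exact_mod_cast hsp)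
    · exact mem_maximalRealSubfield_of_sq_eq_ratCast (r := q) q.cast_nonneg (by exact_mod_cast hsq)
  have : IsTotallyReal K := isTotallyReal_of_adjoin_eq_top hS hgen
  rcases hα with hα | rfl
  · rcases hβ with hβ | rfl
    · exact .inr (.inr (eq_one_of_tPos_of_add_eq_two hα hβ hsum))
    · exact .inr (.inl ⟨by simpa using hsum, rfl⟩)
  · exact .inl ⟨rfl, by simpa using hsum⟩

theorem stmt4 [Field K] [NumberField K]
    (p q : ℕ) (hp : 1 < p) (hq : 1 < q) (hpq : p ≠ q)
    (hps : Squarefree p) (hqs : Squarefree q)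
    (sp sq : K) (hsp : sp ^ 2 = (p : K)) (hsq : sq ^ 2 = (q : K))
    (hgen : Algebra.adjoin ℚ {sp, sq} = ⊤)
    (α β : 𝓞 K) (hα : TNonneg α) (hβ : TNonneg β) (hsum : α + β = 2) :
    (α = 0 ∧ β = 2) ∨ (α = 2 ∧ β = 0) ∨ (α = 1 ∧ β = 1) :=
  stmt4_general p q sp sq hsp hsq hgen α β hα hβ hsum
end

section
/- In any real biquadratic field K = Q(√p,√q), the only decompositions of 3 as a sum of two elements of O_K⁺ ∪ {0} are 3 = 0 + 3, 3 = 1 + 2, and (when √5 ∈ K) 3 = (3+√5)/2 + (3−√5)/2. -/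
/-! A field generated by square roots of positive integers is totally real, and `α + β = 3` with
`α, β` totally nonnegative puts every real conjugate of `α` in `[0, 3]`. If `α ∉ {0, 1, 2, 3}`, then
`δ = α (α - 1) (α - 2) (α - 3)` is a nonzero algebraic integer, so its norm is a nonzero integer
and some conjugate has `|δ| ≥ 1`. On `[0, 3]` one has `|x (x - 1) (x - 2) (x - 3)| < 1` except at
the roots of `x ^ 2 - 3 x + 1`, hence `α ^ 2 - 3 α + 1 = 0`, i.e. `α = (3 ± √5) / 2`. -/

open NumberField

variable {K : Type*}

open InfinitePlace

lemma Complex.star_eq_self_of_sq_eq_ofReal {z : ℂ} {r : ℝ} (hr : 0 ≤ r) (h : z ^ 2 = r) :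
    star z = z := by
  have hsq : z ^ 2 = (Real.sqrt r : ℂ) ^ 2 := by
    rw [h, ← Complex.ofReal_pow, Real.sq_sqrt hr]
  rcases sq_eq_sq_iff_eq_or_eq_neg.mp hsq with rfl | rfl
  · exact Complex.conj_ofReal _
  · rw [star_neg, Complex.star_def, Complex.conj_ofReal]

theorem NumberField.isTotallyReal_of_adjoin_sqrt {K : Type*} [Field K] [NumberField K]
    {S : Set K} (hS : ∀ s ∈ S, ∃ r : ℚ, 0 ≤ r ∧ s ^ 2 = r) (hgen : Algebra.adjoin ℚ S = ⊤) :
    IsTotallyReal K := by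
  rw [← maximalRealSubfield_eq_top_iff_isTotallyReal, eq_top_iff]
  rintro x -
  have hx : x ∈ Algebra.adjoin ℚ S := hgen ▸ Algebra.mem_top
  induction hx using Algebra.adjoin_induction with
  | mem s hs =>
    obtain ⟨r, hr0, hr⟩ := hS s hs
    intro φ
    refine Complex.star_eq_self_of_sq_eq_ofReal (r := r) (by exact_mod_cast hr0) ?_
    rw [← map_pow, hr, map_ratCast, Complex.ofReal_ratCast]
  | algebraMap r =>
    rw [eq_ratCast]
    exact SubfieldClass.ratCast_mem _ r
  | add _ _ _ _ hx hy => exact add_mem hx hy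
  | mul _ _ _ _ hx hy => exact mul_mem hx hy

theorem NumberField.IsTotallyReal.exists_one_le_abs_embedding {K : Type*} [Field K]
    [NumberField K] [IsTotallyReal K] {a : 𝓞 K} (ha : a ≠ 0) : ∃ φ : K →+* ℝ, 1 ≤ |φ a| := by
  by_contra! h
  obtain ⟨w⟩ := (inferInstance : Nonempty (InfinitePlace K))
  have hlt (z : InfinitePlace K) : z a < 1 := by
    rw [← norm_embedding_of_isReal (IsTotallyReal.isReal z)]
    exact h _
  exact (hlt w).not_ge (one_le_of_lt_one ha fun z _ ↦ hlt z)

-- Writing `u = x ^ 2 - 3 * x ∈ [-9/4, 0]`, the product is `(u + 1) ^ 2 - 1`.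
lemma abs_mul_sub_one_mul_sub_two_mul_sub_three_lt_one {x : ℝ} (h0 : 0 ≤ x) (h3 : x ≤ 3)
    (hx : x ^ 2 - 3 * x + 1 ≠ 0) : |x * (x - 1) * (x - 2) * (x - 3)| < 1 := by
  have hpos : 0 < (x ^ 2 - 3 * x + 1) ^ 2 := by positivity
  rw [abs_lt]
  constructor
  · nlinarith
  · nlinarith [mul_nonneg h0 (sub_nonneg.mpr h3), sq_nonneg (2 * x - 3)]

theorem NumberField.RingOfIntegers.eq_of_forall_embedding_mem_Icc_zero_three
    {K : Type*} [Field K] [NumberField K] [IsTotallyReal K] {α : 𝓞 K}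
    (h : ∀ φ : K →+* ℝ, φ α ∈ Set.Icc 0 3) :
    α = 0 ∨ α = 1 ∨ α = 2 ∨ α = 3 ∨ α ^ 2 - 3 * α + 1 = 0 := by
  by_cases hδ : α * (α - 1) * (α - 2) * (α - 3) = 0
  · simp only [mul_eq_zero, sub_eq_zero] at hδ
    tauto
  right; right; right; right
  obtain ⟨φ, hφ⟩ := IsTotallyReal.exists_one_le_abs_embedding hδ
  obtain ⟨h0, h3⟩ := h φ
  suffices φ α ^ 2 - 3 * φ α + 1 = 0 by
    rw [← RingOfIntegers.coe_eq_zero_iff, ← map_eq_zero φ]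
    simpa only [map_add, map_sub, map_pow, map_mul, map_one, map_ofNat] using this
  by_contra hne
  refine hφ.not_gt ?_
  simpa only [RingOfIntegers.coe_eq_algebraMap, map_mul, map_sub, map_one, map_ofNat] using
    abs_mul_sub_one_mul_sub_two_mul_sub_three_lt_one h0 h3 hne

lemma TNonneg.embedding_nonneg [Field K] [NumberField K] {x : 𝓞 K} (hx : TNonneg x)
    (φ : K →+* ℝ) : 0 ≤ φ x := by
  rcases hx with hx | rfl
  · exact (hx φ).le
  · simp

theorem stmt5_general [Field K] [NumberField K]
    (p q : ℕ)
    (sp sq : K) (hsp : sp ^ 2 = (p : K)) (hsq : sq ^ 2 = (q : K))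
    (hgen : Algebra.adjoin ℚ {sp, sq} = ⊤)
    (α β : 𝓞 K) (hα : TNonneg α) (hβ : TNonneg β) (hsum : α + β = 3) :
    (α = 0 ∧ β = 3) ∨ (α = 3 ∧ β = 0) ∨ (α = 1 ∧ β = 2) ∨ (α = 2 ∧ β = 1) ∨
      (∃ s : K, s ^ 2 = 5 ∧ algebraMap (𝓞 K) K α = (3 + s) / 2 ∧
        algebraMap (𝓞 K) K β = (3 - s) / 2) := by
  have : IsTotallyReal K := by
    refine isTotallyReal_of_adjoin_sqrt (S := {sp, sq}) ?_ hgen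
    rintro s (rfl | rfl)
    exacts [⟨p, p.cast_nonneg, by simpa⟩, ⟨q, q.cast_nonneg, by simpa⟩]
  have hbounds (φ : K →+* ℝ) : φ α ∈ Set.Icc 0 3 := by
    have hφβ : φ β = 3 - φ α := by
      rw [← map_ofNat φ 3, ← map_ofNat (algebraMap (𝓞 K) K) 3, ← hsum]; simp
    exact ⟨hα.embedding_nonneg φ, by linarith [hβ.embedding_nonneg φ]⟩
  obtain rfl : β = 3 - α := eq_sub_of_add_eq' hsum
  rcases RingOfIntegers.eq_of_forall_embedding_mem_Icc_zero_three hbounds with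
    rfl | rfl | rfl | rfl | hgolden
  · left; norm_num
  · right; right; left; norm_num
  · right; right; right; left; norm_num
  · right; left; norm_num
  · have hgoldenK : (α : K) ^ 2 - 3 * α + 1 = 0 := by
      simpa only [map_add, map_sub, map_pow, map_mul, map_one, map_ofNat, map_zero] using
        congrArg (algebraMap (𝓞 K) K) hgolden
    refine Or.inr <| Or.inr <| Or.inr <| Or.inr ⟨2 * α - 3, ?_, ?_, ?_⟩
    · linear_combination 4 * hgoldenK
    · ring
    · simp only [map_sub, map_ofNat]
      ring

theorem stmt5 [Field K] [NumberField K]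
    (p q : ℕ) (hp : 1 < p) (hq : 1 < q) (hpq : p ≠ q)
    (hps : Squarefree p) (hqs : Squarefree q)
    (sp sq : K) (hsp : sp ^ 2 = (p : K)) (hsq : sq ^ 2 = (q : K))
    (hgen : Algebra.adjoin ℚ {sp, sq} = ⊤)
    (α β : 𝓞 K) (hα : TNonneg α) (hβ : TNonneg β) (hsum : α + β = 3) :
    (α = 0 ∧ β = 3) ∨ (α = 3 ∧ β = 0) ∨ (α = 1 ∧ β = 2) ∨ (α = 2 ∧ β = 1) ∨
      (∃ s : K, s ^ 2 = 5 ∧ algebraMap (𝓞 K) K α = (3 + s) / 2 ∧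
        algebraMap (𝓞 K) K β = (3 - s) / 2) :=
  stmt5_general p q sp sq hsp hsq hgen α β hα hβ hsum
end

section
/- Let K = Q(ρ) be a simplest cubic field with ring of integers Z[ρ]. If α is an indecomposable totally positive integer in Z[ρ] with 3α − 1 totally positive but 2α − 1 not totally positive or zero, then the form 3x² + 2xy + αy² is additively indecomposable over Z[ρ]. -/
open NumberField

variable {K : Type*}

/-!
If `3x² + 2xy + αy² = Q₁ + Q₂`, the `y²`-coefficients of the `Qᵢ` are totally nonnegative and add
up to `α`, so by indecomposability of `α` one of them, say that of `Q₂`, vanishes. A semidefinite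
form without `y²` term has no `xy` term either, so `Q₂ = a₂x²` and `3 = a₁ + a₂` with both summands
totally positive. In `ℤ[ρ]` this forces `a₁ ∈ {1, 2}`, and evaluating `Q₁ = a₁x² + 2xy + αy²` at
`(1, -1)`, resp. `(1, -2)`, shows `2α - 1 ≻ 0`, resp. `2(2α - 1) ⪰ 0`.

That `3` decomposes only as `1 + 2`: writing `u = x + yρ + zρ²`, the conditions `0 < u < 3` at the
three conjugates `ρ`, `-1/(ρ+1)`, `-(ρ+1)/ρ` bound `z`, then `y`, then `x`.
-/

open Polynomial IntermediateField

theorem eq_zero_of_forall_int_add_mul_nonneg {F : Type*} [Field F] [LinearOrder F]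
    [IsStrictOrderedRing F] [Archimedean F] {A B : F} (h : ∀ n : ℤ, 0 ≤ A + B * n) : B = 0 := by
  rcases lt_trichotomy B 0 with hB | hB | hB
  · obtain ⟨n, hn⟩ := exists_int_gt (-A / B)
    rw [div_lt_iff_of_neg hB] at hn
    linarith [h n]
  · exact hB
  · obtain ⟨n, hn⟩ := exists_int_lt (-A / B)
    rw [lt_div_iff₀ hB] at hn
    linarith [h n]

section TotallyPositive

variable [Field K] [NumberField K] {x y : 𝓞 K}

theorem tpos_two : TPos (2 : 𝓞 K) := fun φ => by
  rw [map_ofNat, map_ofNat]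
  exact two_pos

theorem TNonneg.map_nonneg (h : TNonneg x) (φ : K →+* ℝ) : 0 ≤ φ (algebraMap (𝓞 K) K x) := by
  rcases h with h | rfl
  · exact (h φ).le
  · simp

theorem TPos.add_tnonneg (hx : TPos x) (hy : TNonneg y) : TPos (x + y) := fun φ => by
  rw [map_add, map_add]
  linarith [hx φ, hy.map_nonneg φ]

theorem TPos.tnonneg_of_mul_left (hx : TPos x) (h : TNonneg (x * y)) : TNonneg y := by
  rcases h with h | h
  · exact Or.inl fun φ => pos_of_mul_pos_right (by simpa using h φ) (hx φ).le
  · rcases mul_eq_zero.mp h with rfl | rfl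
    · exact Or.inl fun φ => absurd (hx φ) (by simp)
    · exact Or.inr rfl

end TotallyPositive

section BinaryForms

variable [Field K] [NumberField K] {a b c : 𝓞 K}

theorem BinSemiDef.swap_s14 (h : BinSemiDef a b c) : BinSemiDef c b a := fun x y => by
  convert h y x using 1
  ring

theorem BinSemiDef.tnonneg_left_s14 (h : BinSemiDef a b c) : TNonneg a := by
  simpa using h 1 0

theorem BinSemiDef.tnonneg_right_s14 (h : BinSemiDef a b c) : TNonneg c :=
  h.swap_s14.tnonneg_left_s14

theorem BinSemiDef.middle_eq_zero_of_left_eq_zero_s14 (φ : K →+* ℝ) (h : BinSemiDef 0 b c) : b = 0 := by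
  have hφ : φ (algebraMap (𝓞 K) K b) = 0 :=
    eq_zero_of_forall_int_add_mul_nonneg fun n => by
      simpa [add_comm] using (h n 1).map_nonneg φ
  exact RingOfIntegers.coe_eq_zero_iff.mp (by simpa using hφ)

theorem BinIndec.binIndecCl (h : BinIndec a b c) : BinIndecCl a b c :=
  fun ⟨a₁, b₁, c₁, a₂, b₂, c₂, _, _, hrest⟩ => h ⟨a₁, b₁, c₁, a₂, b₂, c₂, hrest⟩

theorem not_binSemiDef_of_tpos_three_sub (φ : K →+* ℝ)
    (hsplit : ∀ u : 𝓞 K, TPos u → TPos (3 - u) → u = 1 ∨ u = 2) {α A : 𝓞 K} (hα : TPos α)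
    (h2 : ¬ TNonneg (2 * α - 1)) (hA : TPos (3 - A)) : ¬ BinSemiDef A 2 α := by
  intro hS
  have hA₀ : TPos A := hS.tnonneg_left_s14.resolve_right fun h0 =>
    two_ne_zero ((h0 ▸ hS).middle_eq_zero_of_left_eq_zero_s14 φ)
  apply h2
  rcases hsplit A hA₀ hA with rfl | rfl
  · have e : 2 * α - 1 = α + (1 * 1 ^ 2 + 2 * 1 * (-1) + α * (-1) ^ 2) := by ring
    exact e ▸ Or.inl (hα.add_tnonneg (hS 1 (-1)))
  · have e : 2 * (2 * α - 1) = 2 * 1 ^ 2 + 2 * 1 * (-2) + α * (-2) ^ 2 := by ring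
    exact tpos_two.tnonneg_of_mul_left (e ▸ hS 1 (-2))

theorem binIndec_three_two (φ : K →+* ℝ)
    (hsplit : ∀ u : 𝓞 K, TPos u → TPos (3 - u) → u = 1 ∨ u = 2) {α : 𝓞 K} (hα : IndecElem α)
    (h2 : ¬ TNonneg (2 * α - 1)) : BinIndec (3 : 𝓞 K) 2 α := by
  have right_ne_zero : ∀ a₁ b₁ c₁ a₂ b₂ c₂ : 𝓞 K, BinSemiDef a₁ b₁ c₁ → BinSemiDef a₂ b₂ c₂ →
      ¬(a₂ = 0 ∧ b₂ = 0 ∧ c₂ = 0) → 3 = a₁ + a₂ → 2 = b₁ + b₂ → α = c₁ + c₂ → c₂ ≠ 0 := by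
    rintro a₁ b₁ c₁ a₂ b₂ c₂ hS₁ hS₂ hn₂ hA hB hC rfl
    have hb₂ : b₂ = 0 := hS₂.swap_s14.middle_eq_zero_of_left_eq_zero_s14 φ
    have ha₂ : TPos a₂ := hS₂.tnonneg_left_s14.resolve_right fun h => hn₂ ⟨h, hb₂, rfl⟩
    rw [hb₂, add_zero] at hB
    rw [add_zero] at hC
    subst hB hC
    exact not_binSemiDef_of_tpos_three_sub φ hsplit hα.1 h2 (by rwa [hA, add_sub_cancel_left]) hS₁
  rintro ⟨a₁, b₁, c₁, a₂, b₂, c₂, hS₁, hS₂, hn₁, hn₂, hA, hB, hC⟩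
  have hc₁ := right_ne_zero a₂ b₂ c₂ a₁ b₁ c₁ hS₂ hS₁ hn₁ (by rw [hA, add_comm])
    (by rw [hB, add_comm]) (by rw [hC, add_comm])
  have hc₂ := right_ne_zero a₁ b₁ c₁ a₂ b₂ c₂ hS₁ hS₂ hn₂ hA hB hC
  exact hα.2 ⟨c₁, c₂, hS₁.tnonneg_right_s14.resolve_right hc₁, hS₂.tnonneg_right_s14.resolve_right hc₂, hC⟩

end BinaryForms

theorem exists_int_coords_of_adjoin_eq_top {R : Type*} [CommRing R] {ρ : R} {f : ℤ[X]}
    (hf : f.Monic) (hdeg : f.natDegree = 3) (hfρ : aeval ρ f = 0)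
    (hgen : Algebra.adjoin ℤ {ρ} = ⊤) (u : R) : ∃ x y z : ℤ, u = x + y * ρ + z * ρ ^ 2 := by
  have hu : u ∈ Algebra.adjoin ℤ {ρ} := hgen ▸ Algebra.mem_top
  rw [Algebra.adjoin_singleton_eq_range_aeval] at hu
  obtain ⟨g, rfl⟩ := hu
  have hlt : (g %ₘ f).natDegree < 3 := hdeg ▸ natDegree_modByMonic_lt g hf (by
    rintro rfl
    simp at hdeg)
  refine ⟨(g %ₘ f).coeff 0, (g %ₘ f).coeff 1, (g %ₘ f).coeff 2, ?_⟩
  change aeval ρ g = _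
  rw [← aeval_modByMonic_eq_self_of_root hfρ, aeval_eq_sum_range' hlt]
  simp [Finset.sum_range_succ, zsmul_eq_mul]

theorem exists_algHom_apply_eq_of_adjoin_simple_eq_top {F E L : Type*} [Field F] [Field E]
    [Field L] [Algebra F E] [Algebra F L] {θ : E} (hθ : IsIntegral F θ) (htop : F⟮θ⟯ = ⊤)
    {r : L} (hr : aeval r (minpoly F θ) = 0) : ∃ φ : E →ₐ[F] L, φ θ = r :=
  ⟨((algHomAdjoinIntegralEquiv F hθ).symm ⟨r, mem_aroots.mpr ⟨minpoly.ne_zero hθ, hr⟩⟩).comp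
      ((equivOfEq htop).trans topEquiv).symm.toAlgHom,
    algHomAdjoinIntegralEquiv_symm_apply_gen F hθ _⟩

theorem NumberField.adjoin_eq_top_of_adjoin_int_eq_top [Field K] [NumberField K] {ρ : 𝓞 K}
    (hgen : Algebra.adjoin ℤ {ρ} = ⊤) : ℚ⟮algebraMap (𝓞 K) K ρ⟯ = ⊤ := by
  have hmem (u : 𝓞 K) : algebraMap (𝓞 K) K u ∈ ℚ⟮algebraMap (𝓞 K) K ρ⟯ := by
    have hu : u ∈ Algebra.adjoin ℤ {ρ} := hgen ▸ Algebra.mem_top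
    induction hu using Algebra.adjoin_induction with
    | mem x hx =>
      rw [Set.mem_singleton_iff.mp hx]
      exact mem_adjoin_simple_self ℚ _
    | algebraMap n => simp
    | add x y _ _ hx hy => simpa using add_mem hx hy
    | mul x y _ _ hx hy => simpa using mul_mem hx hy
  refine eq_top_iff.mpr fun k _ => ?_
  obtain ⟨u, v, -, rfl⟩ := IsFractionRing.div_surjective (A := 𝓞 K) k
  exact div_mem (hmem u) (hmem v)

noncomputable def simplestCubic (a : ℤ) : ℤ[X] := X ^ 3 - C a * X ^ 2 - C (a + 3) * X - 1

section SimplestCubic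

variable {a : ℤ}

theorem simplestCubic_monic : (simplestCubic a).Monic := by
  unfold simplestCubic
  monicity!

theorem natDegree_simplestCubic : (simplestCubic a).natDegree = 3 := by
  unfold simplestCubic
  compute_degree!

theorem aeval_simplestCubic {R : Type*} [CommRing R] (x : R) :
    aeval x (simplestCubic a) = x ^ 3 - a * x ^ 2 - (a + 3) * x - 1 := by
  simp only [simplestCubic, map_sub, map_mul, map_pow, aeval_X, aeval_C, map_one]
  simp

theorem aeval_simplestCubic_eq_zero_iff {R : Type*} [CommRing R] {x : R} :
    aeval x (simplestCubic a) = 0 ↔ x ^ 3 = a * x ^ 2 + (a + 3) * x + 1 := by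
  rw [aeval_simplestCubic]
  constructor <;> intro h <;> linear_combination h

theorem aeval_simplestCubic_neg_inv_add_one {F : Type*} [Field F] {t : F}
    (ht : aeval t (simplestCubic a) = 0) : aeval (-1 / (t + 1)) (simplestCubic a) = 0 := by
  rw [aeval_simplestCubic] at *
  have : t + 1 ≠ 0 := fun h => by
    rw [eq_neg_of_add_eq_zero_left h] at ht
    exact one_ne_zero (by linear_combination ht : (1 : F) = 0)
  field_simp
  linear_combination -ht

theorem aeval_simplestCubic_neg_add_one_div {F : Type*} [Field F] {t : F}
    (ht : aeval t (simplestCubic a) = 0) : aeval (-(t + 1) / t) (simplestCubic a) = 0 := by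
  rw [aeval_simplestCubic] at *
  have : t ≠ 0 := fun h => by
    rw [h] at ht
    exact one_ne_zero (by linear_combination -ht : (1 : F) = 0)
  field_simp
  linear_combination ht

theorem aeval_simplestCubic_rat_ne_zero (q : ℚ) : aeval q (simplestCubic a) ≠ 0 := by
  intro hq
  obtain ⟨n, rfl⟩ := isInteger_of_is_root_of_monic simplestCubic_monic hq
  have hn : n ^ 3 = a * n ^ 2 + (a + 3) * n + 1 := by
    rw [aeval_algebraMap_apply, map_eq_zero_iff _ (algebraMap ℤ ℚ).injective_int,
      aeval_simplestCubic_eq_zero_iff] at hq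
    simpa using hq
  have hunit : IsUnit n := isUnit_of_dvd_one ⟨n ^ 2 - a * n - (a + 3), by linear_combination -hn⟩
  rcases Int.isUnit_iff.mp hunit with rfl | rfl <;> omega

theorem irreducible_map_simplestCubic : Irreducible ((simplestCubic a).map (algebraMap ℤ ℚ)) :=
  irreducible_of_degree_le_three_of_not_isRoot
    (by simp [simplestCubic_monic.natDegree_map, natDegree_simplestCubic])
    fun q hq => aeval_simplestCubic_rat_ne_zero q (by rwa [IsRoot, eval_map_algebraMap] at hq)

theorem minpoly_eq_simplestCubic {E : Type*} [Field E] [CharZero E] {θ : E}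
    (hθ : aeval θ (simplestCubic a) = 0) : minpoly ℚ θ = (simplestCubic a).map (algebraMap ℤ ℚ) :=
  (minpoly.eq_of_irreducible_of_monic irreducible_map_simplestCubic
    (by rwa [aeval_map_algebraMap]) (simplestCubic_monic.map _)).symm

end SimplestCubic

section RealRoots

variable {a : ℤ} {t : ℝ}

/-- If `t` is the image of `ρ` under a real embedding, the three points are its images under all
real embeddings, so for `u = x + yρ + zρ²` this says that `u` and `3 - u` are totally positive. -/
def ConjBounded (t x y z : ℝ) : Prop :=
  ∀ s ∈ ({t, -1 / (t + 1), -(t + 1) / t} : Set ℝ),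
    0 < x + y * s + z * s ^ 2 ∧ x + y * s + z * s ^ 2 < 3

theorem ConjBounded.three_sub {x y z : ℝ} (h : ConjBounded t x y z) :
    ConjBounded t (3 - x) (-y) (-z) := fun s hs => by
  obtain ⟨h₁, h₂⟩ := h s hs
  constructor <;> linarith

theorem ConjBounded.cleared {x y z : ℝ} (ht : 0 < t) (h : ConjBounded t x y z) :
    0 < x + y * t + z * t ^ 2 ∧ x + y * t + z * t ^ 2 < 3 ∧
    0 < x * (t + 1) ^ 2 - y * (t + 1) + z ∧ x * (t + 1) ^ 2 - y * (t + 1) + z < 3 * (t + 1) ^ 2 ∧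
    0 < x * t ^ 2 - y * t * (t + 1) + z * (t + 1) ^ 2 ∧
      x * t ^ 2 - y * t * (t + 1) + z * (t + 1) ^ 2 < 3 * t ^ 2 := by
  obtain ⟨h₁, h₁'⟩ := h t (by simp)
  obtain ⟨h₂, h₂'⟩ := h (-1 / (t + 1)) (by simp)
  obtain ⟨h₃, h₃'⟩ := h (-(t + 1) / t) (by simp)
  have e₂ : x + y * (-1 / (t + 1)) + z * (-1 / (t + 1)) ^ 2
      = (x * (t + 1) ^ 2 - y * (t + 1) + z) / (t + 1) ^ 2 := by
    field_simp
    ring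
  have e₃ : x + y * (-(t + 1) / t) + z * (-(t + 1) / t) ^ 2
      = (x * t ^ 2 - y * t * (t + 1) + z * (t + 1) ^ 2) / t ^ 2 := by
    field_simp
    ring
  rw [e₂, lt_div_iff₀ (by positivity)] at h₂
  rw [e₂, div_lt_iff₀ (by positivity)] at h₂'
  rw [e₃, lt_div_iff₀ (by positivity)] at h₃
  rw [e₃, div_lt_iff₀ (by positivity)] at h₃'
  exact ⟨h₁, h₁', by simpa using h₂, h₂', by simpa using h₃, h₃'⟩

theorem one_lt_of_simplestCubic (ha : -1 ≤ a) (hR : t ^ 3 = a * t ^ 2 + (a + 3) * t + 1)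
    (ht : a + 1 < t) : 1 < t := by
  rcases (by omega : a = -1 ∨ 0 ≤ a) with rfl | ha₀
  · push_cast at hR ht
    nlinarith
  · have : (0 : ℝ) ≤ a := by exact_mod_cast ha₀
    linarith

theorem ConjBounded.z_mem (ht : 1 < t) {x y z : ℤ} (h : ConjBounded t x y z) :
    z = -1 ∨ z = 0 ∨ z = 1 := by
  have ht₀ : 0 < t := by linarith
  obtain ⟨h₁, h₁', h₂, h₂', h₃, h₃'⟩ := h.cleared ht₀
  -- For the three cleared values `Vᵢ`: `z (t² + t + 1)² = (t² + t) V₁ - t V₂ + (t + 1) V₃`.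
  have hzu : (z : ℝ) < 2 := by
    nlinarith [mul_lt_mul_of_pos_left h₁' (by positivity : (0 : ℝ) < t ^ 2 + t),
      mul_pos ht₀ h₂, mul_lt_mul_of_pos_left h₃' (by linarith : (0 : ℝ) < t + 1),
      pow_pos ht₀ 4, pow_pos ht₀ 3]
  have hzl : (-2 : ℝ) < z := by
    nlinarith [mul_pos (by positivity : (0 : ℝ) < t ^ 2 + t) h₁,
      mul_lt_mul_of_pos_left h₂' ht₀, mul_pos (by linarith : (0 : ℝ) < t + 1) h₃,
      pow_pos ht₀ 4, pow_pos ht₀ 3]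
  have : z < 2 := by exact_mod_cast hzu
  have : -2 < z := by exact_mod_cast hzl
  omega

theorem ConjBounded.neg_one_le_y_of_z_eq_one (ht : 1 < t) {x y : ℤ} (h : ConjBounded t x y 1) :
    -1 ≤ y := by
  have ht₀ : 0 < t := by linarith
  obtain ⟨-, -, h₂, -, -, h₃'⟩ := h.cleared ht₀
  have : (-2 : ℝ) < y := by
    by_contra! hy
    nlinarith [mul_pos h₂ (pow_pos ht₀ 2),
      mul_lt_mul_of_pos_right h₃' (pow_pos (by linarith : (0 : ℝ) < t + 1) 2),
      mul_nonneg (by linarith : (0 : ℝ) ≤ -2 - y)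
        (by positivity : (0 : ℝ) ≤ t * (t + 1) * (t ^ 2 + t + 1)),
      pow_pos ht₀ 3]
  have : -2 < y := by exact_mod_cast this
  omega

theorem not_conjBounded_neg_one_one (ht : 1 < t) {x : ℤ} : ¬ ConjBounded t x (-1) 1 := by
  intro h
  obtain ⟨h₁, h₁', h₂, h₂', h₃, h₃'⟩ := h.cleared (by linarith)
  have hx : x = 0 := by
    have hl : (-1 : ℝ) < x := by nlinarith
    have hu : (x : ℝ) < 1 := by nlinarith
    have : -1 < x := by exact_mod_cast hl
    have : x < 1 := by exact_mod_cast hu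
    omega
  subst hx
  push_cast at h₁' h₃'
  nlinarith

theorem not_conjBounded_one_of_nonneg (ha : -1 ≤ a)
    (hR : t ^ 3 = a * t ^ 2 + (a + 3) * t + 1) (ht : a + 1 < t) {x y : ℤ} (hy : 0 ≤ y) :
    ¬ ConjBounded t x y 1 := by
  intro h
  have ht₁ := one_lt_of_simplestCubic ha hR ht
  have ht₁' : (0 : ℝ) < t + 1 := by linarith
  obtain ⟨h₁, h₁', h₂, h₂', h₃, h₃'⟩ := h.cleared (by linarith)
  have hy' : (0 : ℝ) ≤ y := by exact_mod_cast hy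
  have ht₂ : t ^ 2 * (t + 1) ^ 2 - 1 < 3 * (t + 1) ^ 2 := by
    nlinarith [mul_lt_mul_of_pos_right h₁' (pow_pos ht₁' 2),
      mul_nonneg hy' (by positivity : (0 : ℝ) ≤ t * (t + 1) ^ 2 + (t + 1))]
  rcases (by omega : a = -1 ∨ 0 ≤ a) with rfl | ha₀
  · push_cast at hR
    -- `t ≈ 1.247` is the largest root of `t³ + t² - 2t - 1`.
    have htl : 1.246 < t := by nlinarith
    have htu : t < 1.248 := by nlinarith
    have hy₀ : y = 0 := by
      have : (y : ℝ) < 1 := by nlinarith [mul_lt_mul_of_pos_right h₁' (pow_pos ht₁' 2)]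
      have : y < 1 := by exact_mod_cast this
      omega
    subst hy₀
    push_cast at h₂ h₃'
    have hx₀ : (0 : ℝ) ≤ x := by
      by_contra! hc
      have : x ≤ -1 := by
        have : x < 0 := by exact_mod_cast hc
        omega
      have : (x : ℝ) ≤ -1 := by exact_mod_cast this
      nlinarith
    nlinarith [mul_nonneg hx₀ (sq_nonneg t)]
  · have ha₀' : (0 : ℝ) ≤ a := by exact_mod_cast ha₀
    have h3t : 3 * t + 1 ≤ t ^ 3 := by nlinarith
    nlinarith [mul_le_mul_of_nonneg_left h3t (by linarith : (0 : ℝ) ≤ t),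
      mul_nonneg (sub_nonneg.2 ht₁.le) (by linarith : (0 : ℝ) ≤ t + 2)]

theorem not_conjBounded_one (ha : -1 ≤ a) (hR : t ^ 3 = a * t ^ 2 + (a + 3) * t + 1)
    (ht : a + 1 < t) {x y : ℤ} : ¬ ConjBounded t x y 1 := by
  intro h
  have ht₁ := one_lt_of_simplestCubic ha hR ht
  rcases (h.neg_one_le_y_of_z_eq_one ht₁).eq_or_lt with rfl | hy
  · exact not_conjBounded_neg_one_one ht₁ (by exact_mod_cast h)
  · exact not_conjBounded_one_of_nonneg ha hR ht (by omega) h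

theorem ConjBounded.y_eq_zero_of_z_eq_zero (ht : 1 < t) {x y : ℤ} (h : ConjBounded t x y 0) :
    y = 0 := by
  have ht₀ : 0 < t := by linarith
  obtain ⟨h₁, h₁', h₂, h₂', h₃, h₃'⟩ := h.cleared ht₀
  simp only [zero_mul, add_zero] at h₁ h₁' h₂ h₂' h₃ h₃'
  have hq : (0 : ℝ) < (t + 1) * (t ^ 2 + t + 1) := by positivity
  have hyu : (y : ℝ) < 2 := by
    by_contra! hy
    nlinarith [mul_lt_mul_of_pos_right h₁' (by positivity : (0 : ℝ) < (t + 1) ^ 2),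
      mul_nonneg (by linarith : (0 : ℝ) ≤ y - 2) hq.le,
      mul_pos (by linarith : (0 : ℝ) < t - 1) ht₀]
  have hyl : (-2 : ℝ) < y := by
    by_contra! hy
    nlinarith [mul_pos h₁ (by positivity : (0 : ℝ) < (t + 1) ^ 2),
      mul_nonneg (by linarith : (0 : ℝ) ≤ -2 - y) hq.le,
      mul_pos (by linarith : (0 : ℝ) < t - 1) ht₀]
  have : y < 2 := by exact_mod_cast hyu
  have : -2 < y := by exact_mod_cast hyl
  rcases (by omega : y = -1 ∨ y = 0 ∨ y = 1) with rfl | rfl | rfl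
  · push_cast at h₁ h₁' h₃ h₃'
    have : (1 : ℝ) < x := by nlinarith
    have : (2 : ℝ) ≤ x := by exact_mod_cast (by exact_mod_cast this : (1 : ℤ) < x)
    nlinarith [mul_nonneg (by linarith : (0 : ℝ) ≤ x - 2) (sq_nonneg t)]
  · rfl
  · push_cast at h₁ h₁' h₃ h₃'
    have : (1 : ℝ) < x := by nlinarith [mul_pos ht₀ ht₀]
    have : (2 : ℝ) ≤ x := by exact_mod_cast (by exact_mod_cast this : (1 : ℤ) < x)
    nlinarith

theorem ConjBounded.eq_one_or_two (ha : -1 ≤ a) (hR : t ^ 3 = a * t ^ 2 + (a + 3) * t + 1)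
    (ht : a + 1 < t) {x y z : ℤ} (h : ConjBounded t x y z) :
    (x = 1 ∨ x = 2) ∧ y = 0 ∧ z = 0 := by
  have ht₁ := one_lt_of_simplestCubic ha hR ht
  rcases h.z_mem ht₁ with rfl | rfl | rfl
  · exact (not_conjBounded_one ha hR ht (x := 3 - x) (y := -y) (by simpa using h.three_sub)).elim
  · obtain rfl := ConjBounded.y_eq_zero_of_z_eq_zero ht₁ (by exact_mod_cast h)
    obtain ⟨h₁, h₁', -⟩ := h.cleared (by linarith)
    simp only [Int.cast_zero, zero_mul, add_zero] at h₁ h₁'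
    have : 0 < x := by exact_mod_cast h₁
    have : x < 3 := by exact_mod_cast h₁'
    exact ⟨by omega, rfl, rfl⟩
  · exact (not_conjBounded_one ha hR ht (by exact_mod_cast h)).elim

end RealRoots

section SimplestCubicField

variable [Field K] [NumberField K] {a : ℤ} {ρ : 𝓞 K}

theorem exists_ringHom_apply_eq_of_simplestCubic (hρ : aeval ρ (simplestCubic a) = 0)
    (hgen : Algebra.adjoin ℤ {ρ} = ⊤) {r : ℝ} (hr : aeval r (simplestCubic a) = 0) :
    ∃ φ : K →+* ℝ, φ (algebraMap (𝓞 K) K ρ) = r := by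
  have hθ : aeval (algebraMap (𝓞 K) K ρ) (simplestCubic a) = 0 := by
    rw [aeval_algebraMap_apply, hρ, map_zero]
  obtain ⟨φ, hφ⟩ := exists_algHom_apply_eq_of_adjoin_simple_eq_top
    (Algebra.IsIntegral.isIntegral (R := ℚ) _) (NumberField.adjoin_eq_top_of_adjoin_int_eq_top hgen)
    (r := r) (by rwa [minpoly_eq_simplestCubic hθ, aeval_map_algebraMap])
  exact ⟨φ.toRingHom, hφ⟩

theorem eq_one_or_two_of_tpos_of_tpos_three_sub (ha : -1 ≤ a)
    (hρ : aeval ρ (simplestCubic a) = 0)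
    (hlargest : ∃ φ : K →+* ℝ, (a : ℝ) + 1 < φ (algebraMap (𝓞 K) K ρ))
    (hgen : Algebra.adjoin ℤ {ρ} = ⊤) {u : 𝓞 K} (hu : TPos u) (h3u : TPos (3 - u)) :
    u = 1 ∨ u = 2 := by
  obtain ⟨φ₀, ht⟩ := hlargest
  set t := φ₀ (algebraMap (𝓞 K) K ρ)
  have hRt : aeval t (simplestCubic a) = 0 := by
    rw [show t = (φ₀.comp (algebraMap (𝓞 K) K)).toIntAlgHom ρ from rfl, aeval_algHom_apply, hρ,
      map_zero]
  obtain ⟨x, y, z, rfl⟩ :=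
    exists_int_coords_of_adjoin_eq_top simplestCubic_monic natDegree_simplestCubic hρ hgen u
  have hbounded : ConjBounded t x y z := by
    have hroot : ∀ s : ℝ, aeval s (simplestCubic a) = 0 →
        0 < x + y * s + z * s ^ 2 ∧ x + y * s + z * s ^ 2 < 3 := by
      intro s hs
      obtain ⟨φ, hφ⟩ := exists_ringHom_apply_eq_of_simplestCubic hρ hgen hs
      have h₀ := hu φ
      have h₃ := h3u φ
      simp only [map_add, map_sub, map_mul, map_pow, map_intCast, map_ofNat, hφ] at h₀ h₃
      constructor <;> linarith
    rintro s (rfl | rfl | rfl)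
    · exact hroot _ hRt
    · exact hroot _ (aeval_simplestCubic_neg_inv_add_one hRt)
    · exact hroot _ (aeval_simplestCubic_neg_add_one_div hRt)
  obtain ⟨hx, rfl, rfl⟩ := hbounded.eq_one_or_two ha (aeval_simplestCubic_eq_zero_iff.mp hRt) ht
  rcases hx with rfl | rfl <;> simp

end SimplestCubicField

theorem stmt14_general [Field K] [NumberField K]
    (a : ℤ) (ha : -1 ≤ a) (ρ : 𝓞 K)
    (hρ : ρ ^ 3 = (a : 𝓞 K) * ρ ^ 2 + ((a : 𝓞 K) + 3) * ρ + 1)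
    (hlargest : ∃ φ : K →+* ℝ, (a : ℝ) + 1 < φ (algebraMap (𝓞 K) K ρ))
    (hgen : Algebra.adjoin ℤ {ρ} = (⊤ : Subalgebra ℤ (𝓞 K)))
    (α : 𝓞 K) (hα : IndecElem α)
    (h2 : ¬ TNonneg (2 * α - 1)) :
    BinIndecCl (3 : 𝓞 K) 2 α := by
  have hρ' : aeval ρ (simplestCubic a) = 0 := aeval_simplestCubic_eq_zero_iff.mpr hρ
  have hsplit (u : 𝓞 K) : TPos u → TPos (3 - u) → u = 1 ∨ u = 2 :=
    eq_one_or_two_of_tpos_of_tpos_three_sub ha hρ' hlargest hgen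
  obtain ⟨φ, -⟩ := hlargest
  exact (binIndec_three_two φ hsplit hα h2).binIndecCl

theorem stmt14 [Field K] [NumberField K]
    (a : ℤ) (ha : -1 ≤ a) (ρ : 𝓞 K)
    (hρ : ρ ^ 3 = (a : 𝓞 K) * ρ ^ 2 + ((a : 𝓞 K) + 3) * ρ + 1)
    (hlargest : ∃ φ : K →+* ℝ, (a : ℝ) + 1 < φ (algebraMap (𝓞 K) K ρ))
    (hgen : Algebra.adjoin ℤ {ρ} = (⊤ : Subalgebra ℤ (𝓞 K)))
    (α : 𝓞 K) (hα : IndecElem α) (h3 : TPos (3 * α - 1))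
    (h2 : ¬ TNonneg (2 * α - 1)) :
    BinIndecCl (3 : 𝓞 K) 2 α :=
  stmt14_general a ha ρ hρ hlargest hgen α hα h2
end

section
/- Let K = Q(ρ) be a simplest cubic field with ρ the largest root of x³ − ax² − (a+3)x − 1, and ρ', ρ'' its conjugates. Then the determinant of the Gram matrix of the ternary quadratic form Q(x,y,z) = (1+ρ+ρ²)x² + (1+ρ'+ρ'²)y² + (1+ρ''+ρ''²)z² + 2xy + 2yz equals 1 + ρ' + ρ'², which is totally positive; moreover Q is totally positive definite. -/
/-!
Write `E t = 1 + t + t²`. The roots satisfy `ρ ρ' ρ'' = 1` and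
`(ρ + ρ' + ρ'') + (ρ ρ' + ρ ρ'' + ρ' ρ'') = a - (a + 3) = -3`, and these two relations alone give
`E ρ · E ρ' · E ρ'' = E ρ + E ρ' + E ρ''`, which is the determinant identity. Each `E t` is
totally positive since `4 E t = (2t + 1)² + 3`, and the identity then forces `E ρ · E ρ' > 1`.
So under every real embedding the leading principal minors `E ρ`, `E ρ · E ρ' - 1` and
`E ρ'` of the Gram matrix are positive, and completing squares shows the form is positive definite.
-/

open NumberField

variable {K : Type*}

variable {R : Type*}

lemma vieta_of_three_distinct_roots [CommRing R] [IsDomain R] {b c d p q r : R}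
    (hp : p ^ 3 = b * p ^ 2 + c * p + d) (hq : q ^ 3 = b * q ^ 2 + c * q + d)
    (hr : r ^ 3 = b * r ^ 2 + c * r + d) (hpq : p ≠ q) (hpr : p ≠ r) (hqr : q ≠ r) :
    p + q + r = b ∧ p * q + p * r + q * r = -c ∧ p * q * r = d := by
  have hpq' : p ^ 2 + p * q + q ^ 2 - b * (p + q) - c = 0 := by
    refine (mul_eq_zero.mp ?_).resolve_left (sub_ne_zero.mpr hpq)
    linear_combination hp - hq
  have hpr' : p ^ 2 + p * r + r ^ 2 - b * (p + r) - c = 0 := by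
    refine (mul_eq_zero.mp ?_).resolve_left (sub_ne_zero.mpr hpr)
    linear_combination hp - hr
  have hs₁ : p + q + r = b := by
    have := (mul_eq_zero.mp (?_ : (q - r) * (p + q + r - b) = 0)).resolve_left
      (sub_ne_zero.mpr hqr)
    · linear_combination this
    · linear_combination hpq' - hpr'
  have hs₂ : p * q + p * r + q * r = -c := by linear_combination (p + q) * hs₁ - hpq'
  refine ⟨hs₁, hs₂, ?_⟩
  linear_combination (-p ^ 2) * hs₁ + p * hs₂ + hp

/-- The norm of `1 + t + t²` equals its trace (`= a² + 3a + 9` for the simplest cubic). -/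
lemma prod_one_add_self_add_sq_eq_sum [CommRing R] {p q r : R} (h₃ : p * q * r = 1)
    (h₁₂ : p + q + r + (p * q + p * r + q * r) = -3) :
    (1 + p + p ^ 2) * (1 + q + q ^ 2) * (1 + r + r ^ 2) =
      (1 + p + p ^ 2) + (1 + q + q ^ 2) + (1 + r + r ^ 2) := by
  linear_combination (p * q + p * r + q * r - 1) * h₁₂ +
    (p * q * r - 1 + (p * q + p * r + q * r) - (p + q + r)) * h₃

lemma one_add_self_add_sq_pos [CommRing R] [LinearOrder R] [IsStrictOrderedRing R] (t : R) :
    0 < 1 + t + t ^ 2 := by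
  nlinarith [sq_nonneg (2 * t + 1)]

/-- The ternary form with Gram matrix `!![e₁, 1, 0; 1, e₂, 1; 0, 1, e₃]`. -/
def tridiagForm [CommRing R] (e₁ e₂ e₃ x y z : R) : R :=
  e₁ * x ^ 2 + e₂ * y ^ 2 + e₃ * z ^ 2 + 2 * x * y + 2 * y * z

lemma map_tridiagForm {S : Type*} [CommRing R] [CommRing S] (f : R →+* S) (e₁ e₂ e₃ x y z : R) :
    f (tridiagForm e₁ e₂ e₃ x y z) = tridiagForm (f e₁) (f e₂) (f e₃) (f x) (f y) (f z) := by
  simp [tridiagForm, map_ofNat]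

section OrderedField

variable [Field R] [LinearOrder R] [IsStrictOrderedRing R] {e₁ e₂ e₃ x y z : R}

lemma tridiagForm_pos (he₁ : 0 < e₁) (hD : 0 < e₁ * e₂ - 1)
    (hdet : 0 < e₁ * e₂ * e₃ - e₁ - e₃) (hxyz : ¬(x = 0 ∧ y = 0 ∧ z = 0)) :
    0 < tridiagForm e₁ e₂ e₃ x y z := by
  set D := e₁ * e₂ - 1
  set Δ := e₁ * e₂ * e₃ - e₁ - e₃
  -- completing squares (an `LDLᵀ` decomposition of the Gram matrix)
  have key : D * e₁ * tridiagForm e₁ e₂ e₃ x y z =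
      D * (e₁ * x + y) ^ 2 + (D * y + e₁ * z) ^ 2 + e₁ * Δ * z ^ 2 := by
    simp only [tridiagForm, D, Δ]; ring
  rw [← mul_pos_iff_of_pos_left (mul_pos hD he₁), key]
  have h₁ : 0 ≤ D * (e₁ * x + y) ^ 2 := by positivity
  rcases eq_or_ne z 0 with rfl | hz
  · rcases eq_or_ne y 0 with rfl | hy
    · have hx : x ≠ 0 := by tauto
      simpa using mul_pos hD (sq_pos_of_ne_zero (mul_ne_zero he₁.ne' hx))
    · simpa using add_pos_of_nonneg_of_pos h₁ (sq_pos_of_ne_zero (mul_ne_zero hD.ne' hy))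
  · exact add_pos_of_nonneg_of_pos (by positivity) (by positivity)

lemma tridiagForm_pos_of_mul_eq_add (he₁ : 0 < e₁) (he₂ : 0 < e₂) (he₃ : 0 < e₃)
    (h : e₁ * e₂ * e₃ = e₁ + e₂ + e₃) (hxyz : ¬(x = 0 ∧ y = 0 ∧ z = 0)) :
    0 < tridiagForm e₁ e₂ e₃ x y z := by
  have hD : 0 < e₁ * e₂ - 1 := by
    have : e₃ * (e₁ * e₂ - 1) = e₁ + e₂ := by linear_combination h
    exact pos_of_mul_pos_right (this ▸ add_pos he₁ he₂) he₃.le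
  exact tridiagForm_pos he₁ hD (by linarith) hxyz

end OrderedField

section NumberField

variable [Field K] [NumberField K]

lemma tPos_one_add_self_add_sq (t : 𝓞 K) : TPos (1 + t + t ^ 2) := fun φ => by
  simpa using one_add_self_add_sq_pos (φ (algebraMap (𝓞 K) K t))

lemma TPos.tridiagForm_of_mul_eq_add {e₁ e₂ e₃ : 𝓞 K} (h₁ : TPos e₁) (h₂ : TPos e₂)
    (h₃ : TPos e₃) (h : e₁ * e₂ * e₃ = e₁ + e₂ + e₃) {x y z : 𝓞 K}
    (hxyz : ¬(x = 0 ∧ y = 0 ∧ z = 0)) : TPos (tridiagForm e₁ e₂ e₃ x y z) := fun φ => by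
  let ψ : 𝓞 K →+* ℝ := φ.comp (algebraMap (𝓞 K) K)
  have hψ : Function.Injective ψ := φ.injective.comp RingOfIntegers.coe_injective
  change 0 < ψ _
  rw [map_tridiagForm]
  refine tridiagForm_pos_of_mul_eq_add (h₁ φ) (h₂ φ) (h₃ φ) (by simpa using congrArg ψ h) ?_
  simpa only [map_eq_zero_iff ψ hψ] using hxyz

end NumberField

theorem stmt16_general [Field K] [NumberField K]
    (a : ℤ) (ρ ρ' ρ'' : 𝓞 K)
    (h1 : ρ ^ 3 = (a : 𝓞 K) * ρ ^ 2 + ((a : 𝓞 K) + 3) * ρ + 1)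
    (h2 : ρ' ^ 3 = (a : 𝓞 K) * ρ' ^ 2 + ((a : 𝓞 K) + 3) * ρ' + 1)
    (h3 : ρ'' ^ 3 = (a : 𝓞 K) * ρ'' ^ 2 + ((a : 𝓞 K) + 3) * ρ'' + 1)
    (hd1 : ρ ≠ ρ') (hd2 : ρ ≠ ρ'') (hd3 : ρ' ≠ ρ'')
    (hlargest : ∃ φ : K →+* ℝ, (a : ℝ) + 1 < φ (algebraMap (𝓞 K) K ρ)) :
    Matrix.det !![1 + ρ + ρ ^ 2, 1, 0; 1, 1 + ρ' + ρ' ^ 2, 1; 0, 1, 1 + ρ'' + ρ'' ^ 2]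
        = 1 + ρ' + ρ' ^ 2 ∧
      TPos (1 + ρ' + ρ' ^ 2) ∧
      (∀ x y z : 𝓞 K,
        TNonneg ((1 + ρ + ρ ^ 2) * x ^ 2 + (1 + ρ' + ρ' ^ 2) * y ^ 2 +
          (1 + ρ'' + ρ'' ^ 2) * z ^ 2 + 2 * x * y + 2 * y * z)) ∧
      (∀ x y z : 𝓞 K,
        (1 + ρ + ρ ^ 2) * x ^ 2 + (1 + ρ' + ρ' ^ 2) * y ^ 2 +
          (1 + ρ'' + ρ'' ^ 2) * z ^ 2 + 2 * x * y + 2 * y * z = 0 →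
        x = 0 ∧ y = 0 ∧ z = 0) := by
  obtain ⟨hs₁, hs₂, hs₃⟩ := vieta_of_three_distinct_roots h1 h2 h3 hd1 hd2 hd3
  have hprod := prod_one_add_self_add_sq_eq_sum hs₃ (by rw [hs₁, hs₂]; ring)
  have hpos : ∀ x y z : 𝓞 K, ¬(x = 0 ∧ y = 0 ∧ z = 0) →
      TPos (tridiagForm (1 + ρ + ρ ^ 2) (1 + ρ' + ρ' ^ 2) (1 + ρ'' + ρ'' ^ 2) x y z) :=
    fun x y z => (tPos_one_add_self_add_sq ρ).tridiagForm_of_mul_eq_add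
      (tPos_one_add_self_add_sq ρ') (tPos_one_add_self_add_sq ρ'') hprod
  refine ⟨?_, tPos_one_add_self_add_sq ρ', fun x y z => ?_, fun x y z hQ => ?_⟩
  · rw [Matrix.det_fin_three]
    simp only [Matrix.of_apply, Matrix.cons_val', Matrix.cons_val_zero, Matrix.cons_val_one,
      Matrix.cons_val_two, Matrix.empty_val', Matrix.cons_val_fin_one, Matrix.head_cons,
      Matrix.tail_cons, Matrix.head_fin_const]
    linear_combination hprod
  · by_cases h0 : x = 0 ∧ y = 0 ∧ z = 0
    · obtain ⟨rfl, rfl, rfl⟩ := h0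
      exact .inr (by ring)
    · exact .inl (hpos x y z h0)
  · obtain ⟨φ, -⟩ := hlargest
    by_contra h0
    have := hpos x y z h0 φ
    simp only [tridiagForm, hQ, map_zero, lt_self_iff_false] at this

theorem stmt16 [Field K] [NumberField K]
    (a : ℤ) (ha : -1 ≤ a) (ρ ρ' ρ'' : 𝓞 K)
    (h1 : ρ ^ 3 = (a : 𝓞 K) * ρ ^ 2 + ((a : 𝓞 K) + 3) * ρ + 1)
    (h2 : ρ' ^ 3 = (a : 𝓞 K) * ρ' ^ 2 + ((a : 𝓞 K) + 3) * ρ' + 1)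
    (h3 : ρ'' ^ 3 = (a : 𝓞 K) * ρ'' ^ 2 + ((a : 𝓞 K) + 3) * ρ'' + 1)
    (hd1 : ρ ≠ ρ') (hd2 : ρ ≠ ρ'') (hd3 : ρ' ≠ ρ'')
    (hlargest : ∃ φ : K →+* ℝ, (a : ℝ) + 1 < φ (algebraMap (𝓞 K) K ρ)) :
    Matrix.det !![1 + ρ + ρ ^ 2, 1, 0; 1, 1 + ρ' + ρ' ^ 2, 1; 0, 1, 1 + ρ'' + ρ'' ^ 2]
        = 1 + ρ' + ρ' ^ 2 ∧
      TPos (1 + ρ' + ρ' ^ 2) ∧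
      (∀ x y z : 𝓞 K,
        TNonneg ((1 + ρ + ρ ^ 2) * x ^ 2 + (1 + ρ' + ρ' ^ 2) * y ^ 2 +
          (1 + ρ'' + ρ'' ^ 2) * z ^ 2 + 2 * x * y + 2 * y * z)) ∧
      (∀ x y z : 𝓞 K,
        (1 + ρ + ρ ^ 2) * x ^ 2 + (1 + ρ' + ρ' ^ 2) * y ^ 2 +
          (1 + ρ'' + ρ'' ^ 2) * z ^ 2 + 2 * x * y + 2 * y * z = 0 →
        x = 0 ∧ y = 0 ∧ z = 0) :=
  stmt16_general a ρ ρ' ρ'' h1 h2 h3 hd1 hd2 hd3 hlargest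
end

section
/- Let K = Q(ρ) be a simplest cubic field with O_K = Z[ρ], and define α(v,w) = −v − wρ + (v+1)ρ² for integers 0 ≤ v ≤ a and v(a+2)+1 ≤ w ≤ (v+1)(a+1). If 0 ≤ v ≤ (a−1)/2 and ((2v+1)(a+2)+1)/2 ≤ w ≤ (v+1)(a+1), then 2α(v,w) − 1 = α(2v+1, 2w) is again of the form α(v',w') with parameters in the valid ranges; in particular 2α(v,w) − 1 is totally positive. -/
open NumberField

variable {K : Type*}

/-!
Write `α(V, W) = -V - W t + (V + 1) t²` at a real root `t` of `t³ = A t² + (A + 3) t + 1`.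
At the positive root, `t (t + 2) (t² - (A + 1) t - 1) = (A + 2) t + 1 > 0`, and `α` exceeds
`(V + 1) (t² - (A + 1) t - 1) + 1` by `((V + 1)(A + 1) - W) t ≥ 0`.
At a negative root `t = -s`, modulo the cubic
`-V + (V (A + 2) + 1) s + (V + 1) s² = s (V (A - V) s² + (V s - 1)² + s + V s³ + V s²)`,
which is positive as soon as `0 ≤ V ≤ A`, and `α` exceeds it by `(W - V (A + 2) - 1) s ≥ 0`.
Since `2 α(v, w) - 1 = α(2v + 1, 2w)`, the theorem is the case `(2v + 1, 2w)` of the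
total positivity of the elements of `▲`.
-/

section CubicRoot

variable {A t : ℝ}

lemma sq_sub_mul_sub_one_pos_of_root (hA : -1 ≤ A) (ht : t ^ 3 = A * t ^ 2 + (A + 3) * t + 1)
    (ht0 : 0 < t) : 0 < t ^ 2 - (A + 1) * t - 1 := by
  have hfactor : t * (t + 2) * (t ^ 2 - (A + 1) * t - 1) = (A + 2) * t + 1 := by
    linear_combination (t + 1) * ht
  have hprod : 0 < t * (t + 2) * (t ^ 2 - (A + 1) * t - 1) := by
    rw [hfactor]; nlinarith
  exact pos_of_mul_pos_right hprod (by positivity)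

lemma alpha_pos_of_pos_root {V W : ℝ} (hA : -1 ≤ A) (hV : 0 ≤ V) (hW : W ≤ (V + 1) * (A + 1))
    (ht : t ^ 3 = A * t ^ 2 + (A + 3) * t + 1) (ht0 : 0 < t) :
    0 < -V - W * t + (V + 1) * t ^ 2 := by
  have hr := sq_sub_mul_sub_one_pos_of_root hA ht ht0
  have hslack : 0 ≤ ((V + 1) * (A + 1) - W) * t := mul_nonneg (by linarith) ht0.le
  calc 0 < (V + 1) * (t ^ 2 - (A + 1) * t - 1) + 1 + ((V + 1) * (A + 1) - W) * t := by positivity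
    _ = -V - W * t + (V + 1) * t ^ 2 := by ring

lemma alpha_pos_of_neg_root {V W : ℝ} (hV : 0 ≤ V) (hVA : V ≤ A) (hW : V * (A + 2) + 1 ≤ W)
    (ht : t ^ 3 = A * t ^ 2 + (A + 3) * t + 1) (ht0 : t < 0) :
    0 < -V - W * t + (V + 1) * t ^ 2 := by
  set s := -t with hs
  have hs0 : 0 < s := by linarith
  have hC : 0 < V * (A - V) * s ^ 2 + (V * s - 1) ^ 2 + s + V * s ^ 3 + V * s ^ 2 := by
    have : 0 ≤ V * (A - V) * s ^ 2 := mul_nonneg (mul_nonneg hV (by linarith)) (sq_nonneg s)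
    positivity
  have hslack : 0 ≤ (W - V * (A + 2) - 1) * s := mul_nonneg (by linarith) hs0.le
  calc 0 < (W - V * (A + 2) - 1) * s
          + s * (V * (A - V) * s ^ 2 + (V * s - 1) ^ 2 + s + V * s ^ 3 + V * s ^ 2) := by
        positivity
    _ = -V - W * t + (V + 1) * t ^ 2 := by rw [hs]; linear_combination V * (t - 1) * ht

lemma alpha_pos_of_root {V W : ℝ} (hV : 0 ≤ V) (hVA : V ≤ A) (hW₁ : V * (A + 2) + 1 ≤ W)
    (hW₂ : W ≤ (V + 1) * (A + 1)) (ht : t ^ 3 = A * t ^ 2 + (A + 3) * t + 1) :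
    0 < -V - W * t + (V + 1) * t ^ 2 := by
  rcases lt_trichotomy t 0 with ht0 | rfl | ht0
  · exact alpha_pos_of_neg_root hV hVA hW₁ ht ht0
  · norm_num at ht
  · exact alpha_pos_of_pos_root (by linarith) hV hW₂ ht ht0

end CubicRoot

lemma tpos_alpha [Field K] [NumberField K] {a : ℤ} {ρ : 𝓞 K}
    (hρ : ρ ^ 3 = (a : 𝓞 K) * ρ ^ 2 + ((a : 𝓞 K) + 3) * ρ + 1) {v w : ℤ} (hv₀ : 0 ≤ v)
    (hv : v ≤ a) (hw₁ : v * (a + 2) + 1 ≤ w) (hw₂ : w ≤ (v + 1) * (a + 1)) :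
    TPos (-(v : 𝓞 K) - (w : 𝓞 K) * ρ + ((v : 𝓞 K) + 1) * ρ ^ 2) := by
  intro φ
  let ψ : 𝓞 K →+* ℝ := φ.comp (algebraMap (𝓞 K) K)
  have hψρ : ψ ρ ^ 3 = (a : ℝ) * ψ ρ ^ 2 + ((a : ℝ) + 3) * ψ ρ + 1 := by
    simpa [map_ofNat ψ 3] using congrArg ψ hρ
  have hψ : ψ (-(v : 𝓞 K) - (w : 𝓞 K) * ρ + ((v : 𝓞 K) + 1) * ρ ^ 2)
      = -(v : ℝ) - (w : ℝ) * ψ ρ + ((v : ℝ) + 1) * ψ ρ ^ 2 := by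
    simp
  change 0 < ψ _
  rw [hψ]
  exact alpha_pos_of_root (by exact_mod_cast hv₀) (by exact_mod_cast hv)
    (by exact_mod_cast hw₁) (by exact_mod_cast hw₂) hψρ

theorem stmt17_general [Field K] [NumberField K]
    (a : ℤ) (ρ : 𝓞 K)
    (hρ : ρ ^ 3 = (a : 𝓞 K) * ρ ^ 2 + ((a : 𝓞 K) + 3) * ρ + 1)
    (v w : ℤ) (hv0 : 0 ≤ v) (hv : 2 * v ≤ a - 1)
    (hw1 : (2 * v + 1) * (a + 2) + 1 ≤ 2 * w) (hw2 : w ≤ (v + 1) * (a + 1)) :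
    (0 ≤ 2 * v + 1 ∧ 2 * v + 1 ≤ a ∧
      (2 * v + 1) * (a + 2) + 1 ≤ 2 * w ∧ 2 * w ≤ ((2 * v + 1) + 1) * (a + 1)) ∧
    2 * (-(v : 𝓞 K) - (w : 𝓞 K) * ρ + ((v : 𝓞 K) + 1) * ρ ^ 2) - 1 =
      -((2 * v + 1 : ℤ) : 𝓞 K) - ((2 * w : ℤ) : 𝓞 K) * ρ +
        (((2 * v + 1 : ℤ) : 𝓞 K) + 1) * ρ ^ 2 ∧
    TPos (2 * (-(v : 𝓞 K) - (w : 𝓞 K) * ρ + ((v : 𝓞 K) + 1) * ρ ^ 2) - 1) := by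
  obtain ⟨hv₀', hv', hw₁', hw₂'⟩ : 0 ≤ 2 * v + 1 ∧ 2 * v + 1 ≤ a ∧
      (2 * v + 1) * (a + 2) + 1 ≤ 2 * w ∧ 2 * w ≤ ((2 * v + 1) + 1) * (a + 1) :=
    ⟨by omega, by omega, hw1, by linarith⟩
  have hdouble : 2 * (-(v : 𝓞 K) - (w : 𝓞 K) * ρ + ((v : 𝓞 K) + 1) * ρ ^ 2) - 1 =
      -((2 * v + 1 : ℤ) : 𝓞 K) - ((2 * w : ℤ) : 𝓞 K) * ρ +
        (((2 * v + 1 : ℤ) : 𝓞 K) + 1) * ρ ^ 2 := by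
    push_cast; ring
  refine ⟨⟨hv₀', hv', hw₁', hw₂'⟩, hdouble, ?_⟩
  rw [hdouble]
  exact tpos_alpha hρ hv₀' hv' hw₁' hw₂'

theorem stmt17 [Field K] [NumberField K]
    (a : ℤ) (ha : -1 ≤ a) (ρ : 𝓞 K)
    (hρ : ρ ^ 3 = (a : 𝓞 K) * ρ ^ 2 + ((a : 𝓞 K) + 3) * ρ + 1)
    (hlargest : ∃ φ : K →+* ℝ, (a : ℝ) + 1 < φ (algebraMap (𝓞 K) K ρ))
    (hgen : Algebra.adjoin ℤ {ρ} = (⊤ : Subalgebra ℤ (𝓞 K)))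
    (v w : ℤ) (hv0 : 0 ≤ v) (hv : 2 * v ≤ a - 1)
    (hw1 : (2 * v + 1) * (a + 2) + 1 ≤ 2 * w) (hw2 : w ≤ (v + 1) * (a + 1)) :
    (0 ≤ 2 * v + 1 ∧ 2 * v + 1 ≤ a ∧
      (2 * v + 1) * (a + 2) + 1 ≤ 2 * w ∧ 2 * w ≤ ((2 * v + 1) + 1) * (a + 1)) ∧
    2 * (-(v : 𝓞 K) - (w : 𝓞 K) * ρ + ((v : 𝓞 K) + 1) * ρ ^ 2) - 1 =
      -((2 * v + 1 : ℤ) : 𝓞 K) - ((2 * w : ℤ) : 𝓞 K) * ρ +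
        (((2 * v + 1 : ℤ) : 𝓞 K) + 1) * ρ ^ 2 ∧
    TPos (2 * (-(v : 𝓞 K) - (w : 𝓞 K) * ρ + ((v : 𝓞 K) + 1) * ρ ^ 2) - 1) :=
  stmt17_general a ρ hρ v w hv0 hv hw1 hw2
end
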